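/- arXiv:0810.1632 — 4 statements merged into one kernel-verified Lean document; each statement's English description precedes it below -/
import Mathlib

section
/- Assume Properties P3 and P8 hold (b² = e and N ∩ bNb⁻¹ = {e}). Then for any k ∈ N, if kbk⁻¹b⁻¹ ∈ A then k = e. -/
open scoped commutatorElement

theorem Subgroup.mem_map_conj_of_commutator_mem {G : Type*} [Group G] {H : Subgroup G}
    {b k : G} (hb : b ^ 2 = 1) (hk : k ∈ H) (hkb : ⁅k, b⁆ ∈ H) :
    k ∈ H.map (MulAut.conj b).toMonoidHom := by
  have hb_inv : b⁻¹ = b := inv_eq_of_mul_eq_one_right (by rw [← sq, hb])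
  have hconj : b⁻¹ * k * b = ⁅k, b⁆⁻¹ * k :=
    calc b⁻¹ * k * b = b * k * b⁻¹ := by rw [hb_inv]
      _ = ⁅k, b⁆⁻¹ * k := by rw [commutatorElement_def]; group
  refine ⟨b⁻¹ * k * b, ?_, ?_⟩
  · rw [hconj]
    exact H.mul_mem (H.inv_mem hkb) hk
  · simp only [MulEquiv.coe_toMonoidHom, MulAut.conj_apply]
    group

theorem stmt2_general (S : Type*) [Group S]
    (a b : S)
    (hP3 : b ^ 2 = 1)
    (hP8 : Subgroup.normalizer (Subgroup.zpowers a : Set S) ⊓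
      Subgroup.map (MulAut.conj b).toMonoidHom (Subgroup.normalizer (Subgroup.zpowers a : Set S)) = ⊥) :
    ∀ k ∈ Subgroup.normalizer (Subgroup.zpowers a : Set S),
      k * b * k⁻¹ * b⁻¹ ∈ Subgroup.zpowers a → k = 1 := by
  intro k hk hc
  have hkb : ⁅k, b⁆ ∈ Subgroup.normalizer (Subgroup.zpowers a : Set S) :=
    Subgroup.le_normalizer hc
  have hk_conj := Subgroup.mem_map_conj_of_commutator_mem hP3 hk hkb
  exact Subgroup.mem_bot.mp (hP8 ▸ Subgroup.mem_inf.mpr ⟨hk, hk_conj⟩)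

theorem stmt2 (S : Type*) [Group S] [Finite S] (p : ℕ) (hp : p.Prime) (hp2 : 2 < p)
    (a b : S)
    (hP3 : b ^ 2 = 1)
    (hP8 : Subgroup.normalizer (Subgroup.zpowers a : Set S) ⊓
      Subgroup.map (MulAut.conj b).toMonoidHom (Subgroup.normalizer (Subgroup.zpowers a : Set S)) = ⊥) :
    ∀ k ∈ Subgroup.normalizer (Subgroup.zpowers a : Set S),
      k * b * k⁻¹ * b⁻¹ ∈ Subgroup.zpowers a → k = 1 :=
  stmt2_general S a b hP3 hP8
end

section
/- If g and h are conjugate cyclically reduced elements of G = G₁ *_H G₂, then l(g) = l(h). -/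
universe u

def IsAmalgamIn {G : Type u} [Group G] (G₁ G₂ H T : Subgroup G) : Prop :=
  G₁ ⊓ G₂ = H ∧ G₁ ⊔ G₂ = T ∧
  ∀ (Q : Type u) [Group Q], ∀ (f₁ : ↥G₁ →* Q) (f₂ : ↥G₂ →* Q),
    (∀ (x : G) (hx₁ : x ∈ G₁) (hx₂ : x ∈ G₂), f₁ ⟨x, hx₁⟩ = f₂ ⟨x, hx₂⟩) →
    ∃! f : ↥T →* Q,
      (∀ (x : G) (hx : x ∈ G₁) (hxT : x ∈ T), f ⟨x, hxT⟩ = f₁ ⟨x, hx⟩) ∧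
      (∀ (x : G) (hx : x ∈ G₂) (hxT : x ∈ T), f ⟨x, hxT⟩ = f₂ ⟨x, hx⟩)

/-- `w` is a list of elements lying alternately in `G₁ ∖ H` and `G₂ ∖ H`. -/
def ReducedWord {G : Type u} [Group G] (G₁ G₂ H : Subgroup G) (w : List G) : Prop :=
  (∀ x ∈ w, (x ∈ G₁ ∨ x ∈ G₂) ∧ x ∉ H) ∧
  List.Chain' (fun x y => ¬(x ∈ G₁ ∧ y ∈ G₁) ∧ ¬(x ∈ G₂ ∧ y ∈ G₂)) w

/-!
Conjugation moves lengths by a bounded amount: if `h = k g k⁻¹` and `l(k) ≤ N`, then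
`l(hⁿ) ≤ l(gⁿ) + 2N` for every `n`. For a cyclically reduced `g` the reduced words of the
powers are obtained by concatenation without any cancellation, so `l(gⁿ) = n l(g)`, and likewise
for `h`. Taking `n = 2N + 1` in `n l(h) ≤ n l(g) + 2N` gives `l(h) ≤ l(g)`, and the reverse
inequality by symmetry. That `l` is well defined comes from the normal form theorem for
amalgamated products (`Monoid.PushoutI.NormalWord`), transported to `G` along the universal
property.
-/

section

variable {G : Type u} [Group G] {G₁ G₂ H : Subgroup G}

def NotInSameFactor (G₁ G₂ : Subgroup G) (x y : G) : Prop :=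
  ¬(x ∈ G₁ ∧ y ∈ G₁) ∧ ¬(x ∈ G₂ ∧ y ∈ G₂)

theorem NotInSameFactor.symm {x y : G} (h : NotInSameFactor G₁ G₂ x y) :
    NotInSameFactor G₁ G₂ y x :=
  ⟨fun hyx => h.1 hyx.symm, fun hyx => h.2 hyx.symm⟩

theorem NotInSameFactor.swap {x y : G} (h : NotInSameFactor G₁ G₂ x y) :
    NotInSameFactor G₂ G₁ x y :=
  ⟨h.2, h.1⟩

theorem reducedWord_iff {w : List G} :
    ReducedWord G₁ G₂ H w ↔
      (∀ x ∈ w, (x ∈ G₁ ∨ x ∈ G₂) ∧ x ∉ H) ∧ w.IsChain (NotInSameFactor G₁ G₂) :=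
  Iff.rfl

theorem reducedWord_nil : ReducedWord G₁ G₂ H [] := ⟨by simp, List.isChain_nil⟩

theorem reducedWord_cons_iff {x : G} {w : List G} :
    ReducedWord G₁ G₂ H (x :: w) ↔
      ((x ∈ G₁ ∨ x ∈ G₂) ∧ x ∉ H) ∧ (∀ y ∈ w.head?, NotInSameFactor G₁ G₂ x y) ∧
        ReducedWord G₁ G₂ H w := by
  simp only [reducedWord_iff, List.forall_mem_cons, List.isChain_cons]
  tauto

theorem ReducedWord.swap {w : List G} (hw : ReducedWord G₁ G₂ H w) : ReducedWord G₂ G₁ H w :=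
  ⟨fun x hx => ⟨(hw.1 x hx).1.symm, (hw.1 x hx).2⟩,
    (reducedWord_iff.1 hw).2.imp fun _ _ h => h.swap⟩

def ReducedLengthLE (G₁ G₂ H : Subgroup G) (x : G) (n : ℕ) : Prop :=
  ∃ a ∈ H, ∃ w : List G, ReducedWord G₁ G₂ H w ∧ x = a * w.prod ∧ w.length ≤ n

namespace ReducedLengthLE

theorem mono {x : G} {n m : ℕ} (hx : ReducedLengthLE G₁ G₂ H x n) (hnm : n ≤ m) :
    ReducedLengthLE G₁ G₂ H x m :=
  let ⟨a, ha, w, hw, hxw, hl⟩ := hx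
  ⟨a, ha, w, hw, hxw, hl.trans hnm⟩

theorem swap {x : G} {n : ℕ} (hx : ReducedLengthLE G₁ G₂ H x n) :
    ReducedLengthLE G₂ G₁ H x n :=
  let ⟨a, ha, w, hw, hxw, hl⟩ := hx
  ⟨a, ha, w, hw.swap, hxw, hl⟩

theorem of_mem {a : G} (ha : a ∈ H) : ReducedLengthLE G₁ G₂ H a 0 :=
  ⟨a, ha, [], reducedWord_nil, by simp, le_rfl⟩

theorem mem_mul {a x : G} {n : ℕ} (ha : a ∈ H) (hx : ReducedLengthLE G₁ G₂ H x n) :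
    ReducedLengthLE G₁ G₂ H (a * x) n :=
  let ⟨b, hb, w, hw, hxw, hl⟩ := hx
  ⟨a * b, mul_mem ha hb, w, hw, by rw [hxw, mul_assoc], hl⟩

theorem mul_prod_of_head_not_mem (hinf : G₁ ⊓ G₂ = H) {t : G} (ht : t ∈ G₁) {w : List G}
    (hw : ReducedWord G₁ G₂ H w) (hhead : ∀ y ∈ w.head?, y ∉ G₁) :
    ReducedLengthLE G₁ G₂ H (t * w.prod) (w.length + 1) := by
  by_cases htH : t ∈ H
  · exact ⟨t, htH, w, hw, rfl, Nat.le_succ _⟩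
  refine ⟨1, one_mem _, t :: w, reducedWord_cons_iff.2 ⟨⟨Or.inl ht, htH⟩, ?_, hw⟩,
    by simp, le_rfl⟩
  intro y hy
  exact ⟨fun hty => hhead y hy hty.2,
    fun hty => htH (hinf ▸ Subgroup.mem_inf.2 ⟨ht, hty.1⟩)⟩

theorem mul_left_of_mem_left (hinf : G₁ ⊓ G₂ = H) {s x : G} (hs : s ∈ G₁) {n : ℕ}
    (hx : ReducedLengthLE G₁ G₂ H x n) : ReducedLengthLE G₁ G₂ H (s * x) (n + 1) := by
  have hH₁ : H ≤ G₁ := hinf ▸ inf_le_left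
  obtain ⟨a, ha, w, hw, rfl, hl⟩ := hx
  rw [← mul_assoc]
  have hsa : s * a ∈ G₁ := mul_mem hs (hH₁ ha)
  rcases w with _ | ⟨y, w⟩
  · exact (mul_prod_of_head_not_mem hinf hsa hw (by simp)).mono (by simp)
  obtain ⟨⟨-, -⟩, hyw, hw'⟩ := reducedWord_cons_iff.1 hw
  by_cases hy : y ∈ G₁
  · have := mul_prod_of_head_not_mem hinf (mul_mem hsa hy) hw'
      fun z hz hz₁ => (hyw z hz).1 ⟨hy, hz₁⟩
    rw [List.prod_cons, ← mul_assoc]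
    exact this.mono (by simp only [List.length_cons] at hl; omega)
  · exact (mul_prod_of_head_not_mem hinf hsa hw (by simpa using hy)).mono (by omega)

theorem mul_left (hinf : G₁ ⊓ G₂ = H) {s x : G} (hs : s ∈ G₁ ∨ s ∈ G₂) {n : ℕ}
    (hx : ReducedLengthLE G₁ G₂ H x n) : ReducedLengthLE G₁ G₂ H (s * x) (n + 1) := by
  rcases hs with hs | hs
  · exact mul_left_of_mem_left hinf hs hx
  · exact (mul_left_of_mem_left (inf_comm G₁ G₂ ▸ hinf) hs hx.swap).swap

theorem list_prod_mul (hinf : G₁ ⊓ G₂ = H) {L : List G} (hL : ∀ s ∈ L, s ∈ G₁ ∨ s ∈ G₂)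
    {x : G} {n : ℕ} (hx : ReducedLengthLE G₁ G₂ H x n) :
    ReducedLengthLE G₁ G₂ H (L.prod * x) (L.length + n) := by
  induction L with
  | nil => simpa using hx
  | cons s L ih =>
    rw [List.forall_mem_cons] at hL
    rw [List.prod_cons, mul_assoc, List.length_cons, add_right_comm]
    exact mul_left hinf hL.1 (ih hL.2)

theorem mul (hinf : G₁ ⊓ G₂ = H) {x y : G} {n m : ℕ} (hx : ReducedLengthLE G₁ G₂ H x n)
    (hy : ReducedLengthLE G₁ G₂ H y m) : ReducedLengthLE G₁ G₂ H (x * y) (n + m) := by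
  obtain ⟨a, ha, w, hw, rfl, hl⟩ := hx
  rw [mul_assoc]
  exact mem_mul ha ((list_prod_mul hinf (fun s hs => (hw.1 s hs).1) hy).mono (by omega))

theorem inv (hinf : G₁ ⊓ G₂ = H) {x : G} {n : ℕ} (hx : ReducedLengthLE G₁ G₂ H x n) :
    ReducedLengthLE G₁ G₂ H x⁻¹ n := by
  obtain ⟨a, ha, w, hw, rfl, hl⟩ := hx
  have hL : ∀ s ∈ (w.map (·⁻¹)).reverse, s ∈ G₁ ∨ s ∈ G₂ := by
    simp only [List.mem_reverse, List.mem_map]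
    rintro _ ⟨s, hs, rfl⟩
    exact (hw.1 s hs).1.imp inv_mem inv_mem
  rw [mul_inv_rev, List.prod_inv_reverse]
  exact (list_prod_mul hinf hL (of_mem (inv_mem ha))).mono (by simp [hl])

end ReducedLengthLE

theorem exists_reducedLengthLE (hinf : G₁ ⊓ G₂ = H) (hsup : G₁ ⊔ G₂ = ⊤) (x : G) :
    ∃ n, ReducedLengthLE G₁ G₂ H x n := by
  have hx : x ∈ Subgroup.closure ((G₁ : Set G) ∪ G₂) := by
    rw [← Subgroup.sup_eq_closure, hsup]
    trivial
  induction hx using Subgroup.closure_induction with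
  | mem s hs => exact ⟨1, by simpa using (ReducedLengthLE.of_mem (one_mem H)).mul_left hinf hs⟩
  | one => exact ⟨0, ReducedLengthLE.of_mem (one_mem H)⟩
  | mul y z _ _ hy hz =>
    obtain ⟨n, hy⟩ := hy
    obtain ⟨m, hz⟩ := hz
    exact ⟨n + m, hy.mul hinf hz⟩
  | inv y _ hy =>
    obtain ⟨n, hy⟩ := hy
    exact ⟨n, hy.inv hinf⟩

/-- The empty word qualifies; a single letter `x` never does, since
`NotInSameFactor G₁ G₂ x x` forces `x ∉ G₁ ∪ G₂`. -/
def IsCyclicallyReduced (G₁ G₂ H : Subgroup G) (w : List G) : Prop :=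
  ReducedWord G₁ G₂ H w ∧ ∀ x ∈ w.getLast?, ∀ y ∈ w.head?, NotInSameFactor G₁ G₂ x y

namespace IsCyclicallyReduced

theorem reducedWord_flatten_replicate {w : List G} (hw : IsCyclicallyReduced G₁ G₂ H w)
    (n : ℕ) : ReducedWord G₁ G₂ H (List.replicate n w).flatten := by
  rcases eq_or_ne w [] with rfl | hne
  · simpa using reducedWord_nil
  refine ⟨fun x hx => ?_, ?_⟩
  · obtain ⟨l, hl, hxl⟩ := List.mem_flatten.1 hx
    exact hw.1.1 x ((List.eq_of_mem_replicate hl) ▸ hxl)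
  · refine (List.isChain_flatten (by simp [hne])).2 ⟨?_, ?_⟩
    · intro l hl
      exact List.eq_of_mem_replicate hl ▸ hw.1.2
    · exact List.isChain_replicate_of_rel n hw.2

theorem mul_head (hinf : G₁ ⊓ G₂ = H) {a y : G} (ha : a ∈ H) {w : List G}
    (hw : IsCyclicallyReduced G₁ G₂ H (y :: w)) : IsCyclicallyReduced G₁ G₂ H ((a * y) :: w) := by
  obtain ⟨ha₁, ha₂⟩ := Subgroup.mem_inf.1 (hinf ▸ ha)
  have h₁ : a * y ∈ G₁ ↔ y ∈ G₁ := mul_mem_cancel_left ha₁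
  have h₂ : a * y ∈ G₂ ↔ y ∈ G₂ := mul_mem_cancel_left ha₂
  have hH : a * y ∈ H ↔ y ∈ H := mul_mem_cancel_left ha
  obtain ⟨hw, hcyc⟩ := hw
  rw [reducedWord_cons_iff] at hw
  refine ⟨reducedWord_cons_iff.2 ?_, ?_⟩
  · simpa [NotInSameFactor, h₁, h₂, hH] using hw
  · cases w <;> simpa [NotInSameFactor, h₁, h₂] using hcyc

theorem exists_reducedWord_pow_eq (hinf : G₁ ⊓ G₂ = H) {a : G} (ha : a ∈ H) {w : List G}
    (hw : IsCyclicallyReduced G₁ G₂ H w) (n : ℕ) :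
    ∃ b ∈ H, ∃ u : List G, ReducedWord G₁ G₂ H u ∧ (a * w.prod) ^ n = b * u.prod ∧
      u.length = n * w.length := by
  rcases w with _ | ⟨y, w⟩
  · exact ⟨a ^ n, pow_mem ha n, [], reducedWord_nil, by simp, by simp⟩
  refine ⟨1, one_mem H, (List.replicate n ((a * y) :: w)).flatten,
    (hw.mul_head hinf ha).reducedWord_flatten_replicate n, ?_, by simp⟩
  simp [List.prod_flatten, List.prod_replicate, mul_assoc]

end IsCyclicallyReduced

theorem Monoid.PushoutI.Reduced.length_eq_of_base_mul_prod_eq {ι : Type*} {K : ι → Type*}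
    {A : Type*} [∀ i, Group (K i)] [Group A] {φ : ∀ i, A →* K i}
    (hφ : ∀ i, Function.Injective (φ i)) {w v : Monoid.CoprodI.Word K}
    (hw : Reduced φ w) (hv : Reduced φ v) {a b : A}
    (h : base φ a * ofCoprodI w.prod = base φ b * ofCoprodI v.prod) :
    w.toList.length = v.toList.length := by
  obtain ⟨d⟩ := NormalWord.transversal_nonempty φ hφ
  obtain ⟨w', hw'prod, hw'fst⟩ := hw.exists_normalWord_prod_eq d
  obtain ⟨v', hv'prod, hv'fst⟩ := hv.exists_normalWord_prod_eq d
  have hsmul : a • w' = b • v' :=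
    NormalWord.prod_injective (by simp only [NormalWord.prod_base_smul, hw'prod, hv'prod, h])
  have hlist : w'.toList = v'.toList := congrArg (fun u => u.toList) hsmul
  have := congrArg (fun l => (l.map Sigma.fst).length) hlist
  simpa only [hw'fst, hv'fst, List.length_map] using this

open Monoid

def amalgamDiagram (hinf : G₁ ⊓ G₂ = H) (b : Bool) : ↥H →* ↥(cond b G₁ G₂) :=
  Subgroup.inclusion (by cases b <;> simp [← hinf])

open Classical in
/-- The final branch is junk: only elements of `G₁ ∪ G₂` are ever turned into letters. -/
noncomputable def letter (G₁ G₂ : Subgroup G) (x : G) : Σ b : Bool, ↥(cond b G₁ G₂) :=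
  if hx₁ : x ∈ G₁ then ⟨true, ⟨x, hx₁⟩⟩
  else if hx₂ : x ∈ G₂ then ⟨false, ⟨x, hx₂⟩⟩ else ⟨true, 1⟩

theorem coe_letter_snd {x : G} (hx : x ∈ G₁ ∨ x ∈ G₂) : ((letter G₁ G₂ x).2 : G) = x := by
  unfold letter
  by_cases hx₁ : x ∈ G₁
  · rw [dif_pos hx₁]
  · rw [dif_neg hx₁, dif_pos (hx.resolve_left hx₁)]

theorem mem_letter_fst {x : G} (hx : x ∈ G₁ ∨ x ∈ G₂) :
    x ∈ cond (letter G₁ G₂ x).1 G₁ G₂ := by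
  simpa only [coe_letter_snd hx] using (letter G₁ G₂ x).2.2

namespace ReducedWord

noncomputable def toWord {w : List G} (hw : ReducedWord G₁ G₂ H w) :
    CoprodI.Word fun b : Bool => ↥(cond b G₁ G₂) where
  toList := w.map (letter G₁ G₂)
  ne_one := by
    simp only [List.mem_map]
    rintro _ ⟨x, hx, rfl⟩ h1
    apply (hw.1 x hx).2
    rw [← coe_letter_snd (hw.1 x hx).1, h1]
    exact one_mem H
  chain_ne := by
    rw [List.isChain_map]
    refine (reducedWord_iff.1 hw).2.imp_of_mem_imp fun x y hx hy hxy hfst => ?_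
    have hx' := mem_letter_fst (hw.1 x hx).1
    have hy' := mem_letter_fst (hw.1 y hy).1
    rw [hfst] at hx'
    generalize (letter G₁ G₂ y).1 = b at hx' hy'
    cases b
    exacts [hxy.2 ⟨hx', hy'⟩, hxy.1 ⟨hx', hy'⟩]

theorem reduced_toWord (hinf : G₁ ⊓ G₂ = H) {w : List G} (hw : ReducedWord G₁ G₂ H w) :
    PushoutI.Reduced (amalgamDiagram hinf) hw.toWord := by
  rintro _ hl ⟨c, hc⟩
  obtain ⟨x, hx, rfl⟩ := List.mem_map.1 hl
  apply (hw.1 x hx).2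
  rw [← coe_letter_snd (hw.1 x hx).1, ← hc]
  exact c.2

theorem ofCoprodI_toWord_prod (hinf : G₁ ⊓ G₂ = H) {ψ : G →* PushoutI (amalgamDiagram hinf)}
    (hψ : ∀ b (x : G) (hx : x ∈ cond b G₁ G₂), ψ x = PushoutI.of b ⟨x, hx⟩)
    {w : List G} (hw : ReducedWord G₁ G₂ H w) :
    PushoutI.ofCoprodI hw.toWord.prod = ψ w.prod := by
  rw [CoprodI.Word.prod, map_list_prod, map_list_prod]
  simp only [toWord, List.map_map]
  refine congrArg List.prod (List.map_congr_left fun x hx => ?_)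
  rw [Function.comp_apply, Function.comp_apply, PushoutI.ofCoprodI_of]
  conv_rhs => rw [← coe_letter_snd (hw.1 x hx).1]
  exact (hψ _ _ (letter G₁ G₂ x).2.2).symm

end ReducedWord

theorem IsAmalgamIn.exists_hom_pushoutI (hG : IsAmalgamIn G₁ G₂ H ⊤) :
    ∃ ψ : G →* PushoutI (amalgamDiagram hG.1),
      ∀ b (x : G) (hx : x ∈ cond b G₁ G₂), ψ x = PushoutI.of b ⟨x, hx⟩ := by
  have hcompat : ∀ (x : G) (hx₁ : x ∈ G₁) (hx₂ : x ∈ G₂),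
      PushoutI.of (φ := amalgamDiagram hG.1) true (⟨x, hx₁⟩ : ↥G₁) =
        PushoutI.of false (⟨x, hx₂⟩ : ↥G₂) :=
    fun x hx₁ hx₂ => by
      have hx : x ∈ H := hG.1 ▸ Subgroup.mem_inf.2 ⟨hx₁, hx₂⟩
      exact (PushoutI.of_apply_eq_base (amalgamDiagram hG.1) true ⟨x, hx⟩).trans
        (PushoutI.of_apply_eq_base (amalgamDiagram hG.1) false ⟨x, hx⟩).symm
  obtain ⟨f, ⟨hf₁, hf₂⟩, -⟩ := hG.2.2 _ _ _ hcompat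
  refine ⟨f.comp Subgroup.topEquiv.symm.toMonoidHom, fun b x hx => ?_⟩
  cases b
  exacts [hf₂ x hx trivial, hf₁ x hx trivial]

theorem IsAmalgamIn.length_eq_of_mul_prod_eq (hG : IsAmalgamIn G₁ G₂ H ⊤) {a b : G}
    (ha : a ∈ H) (hb : b ∈ H) {w v : List G} (hw : ReducedWord G₁ G₂ H w)
    (hv : ReducedWord G₁ G₂ H v) (h : a * w.prod = b * v.prod) : w.length = v.length := by
  obtain ⟨ψ, hψ⟩ := hG.exists_hom_pushoutI
  have hψH : ∀ (c : G) (hc : c ∈ H), ψ c = PushoutI.base _ ⟨c, hc⟩ := fun c hc =>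
    (hψ true c _).trans (PushoutI.of_apply_eq_base (amalgamDiagram hG.1) true ⟨c, hc⟩)
  have := (hw.reduced_toWord hG.1).length_eq_of_base_mul_prod_eq (φ := amalgamDiagram hG.1)
    (fun _ => Subgroup.inclusion_injective _) (hv.reduced_toWord hG.1) (a := ⟨a, ha⟩)
    (b := ⟨b, hb⟩) (by
      rw [hw.ofCoprodI_toWord_prod hG.1 hψ, hv.ofCoprodI_toWord_prod hG.1 hψ, ← hψH, ← hψH,
        ← map_mul, ← map_mul, h])
  simpa [ReducedWord.toWord] using this

theorem IsAmalgamIn.length_le_of_conj (hG : IsAmalgamIn G₁ G₂ H ⊤) {g h k : G}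
    (hconj : h = k * g * k⁻¹) {g₀ h₀ : G} (hg₀ : g₀ ∈ H) (hh₀ : h₀ ∈ H) {wg wh : List G}
    (hwg : IsCyclicallyReduced G₁ G₂ H wg) (hgdec : g = g₀ * wg.prod)
    (hwh : IsCyclicallyReduced G₁ G₂ H wh) (hhdec : h = h₀ * wh.prod) :
    wh.length ≤ wg.length := by
  obtain ⟨nk, hk⟩ := exists_reducedLengthLE hG.1 hG.2.1 k
  set n := 2 * nk + 1 with hn
  obtain ⟨b, hb, u, hu, hhpow, hulen⟩ := hwh.exists_reducedWord_pow_eq hG.1 hh₀ n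
  obtain ⟨c, hc, v, hv, hgpow, hvlen⟩ := hwg.exists_reducedWord_pow_eq hG.1 hg₀ n
  have hbound : ReducedLengthLE G₁ G₂ H (h ^ n) (nk + n * wg.length + nk) := by
    rw [hconj, conj_pow, hgdec]
    exact (hk.mul hG.1 ⟨c, hc, v, hv, hgpow, hvlen.le⟩).mul hG.1 (hk.inv hG.1)
  obtain ⟨d, hd, v', hv', hdec, hlen⟩ := hbound
  have hulen' : u.length = v'.length :=
    hG.length_eq_of_mul_prod_eq hb hd hu hv' (by rw [← hhpow, ← hdec, hhdec])
  have : n * wh.length < n * (wg.length + 1) := by rw [Nat.mul_succ]; omega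
  exact Nat.lt_succ_iff.1 (Nat.lt_of_mul_lt_mul_left this)

end

theorem stmt4_general {G : Type u} [Group G] (G₁ G₂ H : Subgroup G)
    (hG : IsAmalgamIn G₁ G₂ H ⊤)
    (g h k : G) (hconj : h = k * g * k⁻¹)
    (g₀ : G) (hg₀ : g₀ ∈ H) (wg : List G)
    (hwg : ReducedWord G₁ G₂ H wg) (hgdec : g = g₀ * wg.prod)
    (hgcyc : ∀ x y : G, wg.head? = some x → wg.getLast? = some y →
      ¬(x ∈ G₁ ∧ y ∈ G₁) ∧ ¬(x ∈ G₂ ∧ y ∈ G₂))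
    (h₀ : G) (hh₀ : h₀ ∈ H) (wh : List G)
    (hwh : ReducedWord G₁ G₂ H wh) (hhdec : h = h₀ * wh.prod)
    (hhcyc : ∀ x y : G, wh.head? = some x → wh.getLast? = some y →
      ¬(x ∈ G₁ ∧ y ∈ G₁) ∧ ¬(x ∈ G₂ ∧ y ∈ G₂)) :
    wg.length = wh.length := by
  have hg : IsCyclicallyReduced G₁ G₂ H wg :=
    ⟨hwg, fun y hy x hx => NotInSameFactor.symm (hgcyc x y hx hy)⟩
  have hh : IsCyclicallyReduced G₁ G₂ H wh :=
    ⟨hwh, fun y hy x hx => NotInSameFactor.symm (hhcyc x y hx hy)⟩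
  have hconj' : g = k⁻¹ * h * k⁻¹⁻¹ := by rw [hconj]; group
  exact le_antisymm (hG.length_le_of_conj hconj' hh₀ hg₀ hh hhdec hg hgdec)
    (hG.length_le_of_conj hconj hg₀ hh₀ hg hgdec hh hhdec)

theorem stmt4 {G : Type u} [Group G] (G₁ G₂ H : Subgroup G)
    (hG : IsAmalgamIn G₁ G₂ H ⊤)
    (g h k : G) (hconj : h = k * g * k⁻¹)
    (g₀ : G) (hg₀ : g₀ ∈ H) (wg : List G)
    (hwg : ReducedWord G₁ G₂ H wg) (hgdec : g = g₀ * wg.prod)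
    (hglen : 2 ≤ wg.length)
    (hgcyc : ∀ x y : G, wg.head? = some x → wg.getLast? = some y →
      ¬(x ∈ G₁ ∧ y ∈ G₁) ∧ ¬(x ∈ G₂ ∧ y ∈ G₂))
    (h₀ : G) (hh₀ : h₀ ∈ H) (wh : List G)
    (hwh : ReducedWord G₁ G₂ H wh) (hhdec : h = h₀ * wh.prod)
    (hhlen : 2 ≤ wh.length)
    (hhcyc : ∀ x y : G, wh.head? = some x → wh.getLast? = some y →
      ¬(x ∈ G₁ ∧ y ∈ G₁) ∧ ¬(x ∈ G₂ ∧ y ∈ G₂)) :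
    wg.length = wh.length :=
  stmt4_general G₁ G₂ H hG g h k hconj g₀ hg₀ wg hwg hgdec hgcyc h₀ hh₀ wh hwh hhdec hhcyc
end

section
/- Suppose H₀ ⊆ H is a subgroup such that for every x ∈ G₁ ∪ G₂, the inclusion xH₀x⁻¹ ⊆ H implies xH₀x⁻¹ = H₀. Then the normalizer of H₀ in G = G₁ *_H G₂ is the subgroup of G generated by N_{G₁}(H₀) ∪ N_{G₂}(H₀) (indeed, H₀ is normal in H, H is contained in both N_{G₁}(H₀) and N_{G₂}(H₀), and N_G(H₀) = N_{G₁}(H₀) *_H N_{G₂}(H₀)). -/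
universe u

open Monoid Function

/-! By the normal form theorem for amalgams, the canonical map from the abstract amalgam
`PushoutI` to `G` is injective iff no nonempty reduced sequence `x₁, …, xₖ` (letters from the
factors, outside `H`, consecutive letters from different factors) has product in `H`.

Write `g ∈ N_G(H₀)` as `h x₁ ⋯ xₖ` with `h ∈ H` and `x₁, …, xₖ` reduced; then
`(x₁ ⋯ xₖ)⁻¹ H₀ (x₁ ⋯ xₖ) ⊆ H`. If `x₁⁻¹ n x₁ ∉ H` for some `n ∈ H₀`, the sequence
`xₖ⁻¹, …, x₂⁻¹, x₁⁻¹ n x₁, x₂, …, xₖ` is nonempty, reduced and has product in `H`, which is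
impossible. So `x₁⁻¹ H₀ x₁ ⊆ H`, the hypothesis makes `x₁` normalize `H₀`, and by induction every
letter lies in `N_{G₁}(H₀)` or `N_{G₂}(H₀)`. Finally, a reduced sequence for the factors
`N_{Gᵢ}(H₀)` is reduced for the factors `Gᵢ`, so the normal form theorem, applied in both
directions, shows that these normalizers form an amalgam over `H`. -/

theorem Monoid.PushoutI.NormalWord.reduced {ι H : Type*} {K : ι → Type*} [∀ i, Group (K i)]
    [Group H] {φ : ∀ i, H →* K i} {d : PushoutI.NormalWord.Transversal φ}
    (w : PushoutI.NormalWord d) : PushoutI.Reduced φ w.toWord := by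
  rintro ⟨i, g⟩ hg hr
  refine w.ne_one _ hg ?_
  obtain ⟨x, -, hx⟩ := (d.compl i).existsUnique g
  have h₁ := hx (⟨g, hr⟩, ⟨1, d.one_mem i⟩) (mul_one _)
  have h₂ := hx (⟨1, one_mem _⟩, ⟨g, w.normalized i g hg⟩) (one_mul _)
  exact congrArg (fun x => (x.2 : K i)) (h₂.trans h₁.symm)

namespace Subgroup

variable {G ι : Type*} [Group G] {A : ι → Subgroup G} {H : Subgroup G}

def pushoutLift (hle : ∀ i, H ≤ A i) : PushoutI (fun i => inclusion (hle i)) →* G :=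
  PushoutI.lift (fun i => (A i).subtype) H.subtype fun _ => rfl

@[simp]
lemma pushoutLift_of (hle : ∀ i, H ≤ A i) (i : ι) (x : A i) :
    pushoutLift hle (PushoutI.of i x) = x :=
  PushoutI.lift_of ..

@[simp]
lemma pushoutLift_base (hle : ∀ i, H ≤ A i) (h : H) :
    pushoutLift hle (PushoutI.base _ h) = h :=
  PushoutI.lift_base ..

lemma range_pushoutLift [Nonempty ι] (hle : ∀ i, H ≤ A i) :
    (pushoutLift hle).range = ⨆ i, A i := by
  refine le_antisymm ?_ (iSup_le fun i x hx => ⟨PushoutI.of i ⟨x, hx⟩, pushoutLift_of ..⟩)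
  rintro _ ⟨p, rfl⟩
  induction p using PushoutI.induction_on with
  | of i x => simpa using mem_iSup_of_mem i x.2
  | base h => simpa using mem_iSup_of_mem (Classical.arbitrary ι) (hle _ h.2)
  | mul p q hp hq => simpa using mul_mem hp hq

lemma reduced_inclusion_iff (hle : ∀ i, H ≤ A i) {w : CoprodI.Word fun i => A i} :
    PushoutI.Reduced (fun i => inclusion (hle i)) w ↔ ∀ x ∈ w.toList, (x.2 : G) ∉ H := by
  simp [PushoutI.Reduced, inclusion_range, mem_subgroupOf]

def IsReducedSeq (H : Subgroup G) (l : List (Σ i, A i)) : Prop :=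
  (∀ x ∈ l, (x.2 : G) ∉ H) ∧ l.IsChain fun x y => x.1 ≠ y.1

def seqProd (l : List (Σ i, A i)) : G := (l.map fun x => (x.2 : G)).prod

def seqInv (l : List (Σ i, A i)) : List (Σ i, A i) := l.reverse.map fun x => ⟨x.1, x.2⁻¹⟩

@[simp] lemma seqProd_nil : seqProd ([] : List (Σ i, A i)) = 1 := rfl

@[simp] lemma seqProd_cons (x : Σ i, A i) (l : List (Σ i, A i)) :
    seqProd (x :: l) = x.2 * seqProd l := List.prod_cons

@[simp] lemma seqProd_append (l₁ l₂ : List (Σ i, A i)) :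
    seqProd (l₁ ++ l₂) = seqProd l₁ * seqProd l₂ := by
  simp [seqProd]

@[simp] lemma seqProd_seqInv (l : List (Σ i, A i)) : seqProd (seqInv l) = (seqProd l)⁻¹ := by
  induction l with
  | nil => simp [seqInv]
  | cons x l ih => simp_all [seqInv]

lemma pushoutLift_ofCoprodI_prod (hle : ∀ i, H ≤ A i) (w : CoprodI.Word fun i => A i) :
    pushoutLift hle (PushoutI.ofCoprodI w.prod) = seqProd w.toList := by
  simp [CoprodI.Word.prod, seqProd, map_list_prod, Function.comp_def]

namespace IsReducedSeq

variable {l : List (Σ i, A i)}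

lemma of_cons {x : Σ i, A i} (hl : IsReducedSeq H (x :: l)) : IsReducedSeq H l :=
  ⟨fun y hy => hl.1 y (List.mem_cons_of_mem _ hy), hl.2.tail⟩

def toWord (hl : IsReducedSeq H l) : CoprodI.Word fun i => A i where
  toList := l
  ne_one x hx h1 := hl.1 x hx (by simp [h1])
  chain_ne := hl.2

@[simp]
lemma toWord_toList (hl : IsReducedSeq H l) : hl.toWord.toList = l := rfl

lemma reduced (hle : ∀ i, H ≤ A i) (hl : IsReducedSeq H l) :
    PushoutI.Reduced (fun i => inclusion (hle i)) hl.toWord :=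
  (reduced_inclusion_iff hle).2 hl.1

lemma seqInv (hl : IsReducedSeq H l) : IsReducedSeq H (seqInv l) := by
  refine ⟨?_, ?_⟩
  · intro x hx
    obtain ⟨y, hy, rfl⟩ := List.mem_map.1 hx
    simpa using hl.1 y (List.mem_reverse.1 hy)
  · simpa [Subgroup.seqInv, List.isChain_map, List.isChain_reverse, ne_comm] using hl.2

lemma seqInv_append_cons {x : Σ i, A i} {t : List (Σ i, A i)} (hl : IsReducedSeq H (x :: t))
    {m : A x.1} (hm : (m : G) ∉ H) : IsReducedSeq H (Subgroup.seqInv t ++ ⟨x.1, m⟩ :: t) := by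
  have hmt : IsReducedSeq H (⟨x.1, m⟩ :: t) :=
    ⟨List.forall_mem_cons.2 ⟨hm, hl.of_cons.1⟩,
      List.isChain_cons.2 ⟨(List.isChain_cons.1 hl.2).1, hl.2.tail⟩⟩
  refine ⟨fun y hy => ?_, hl.of_cons.seqInv.2.append hmt.2 ?_⟩
  · rcases List.mem_append.1 hy with hy | hy
    exacts [hl.of_cons.seqInv.1 y hy, hmt.1 y hy]
  · cases t with
    | nil => simp [Subgroup.seqInv]
    | cons y t =>
      have hxy : x.1 ≠ y.1 := (List.isChain_cons.1 hl.2).1 y rfl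
      simpa [Subgroup.seqInv, List.getLast?_map, eq_comm] using hxy

end IsReducedSeq

lemma exists_base_mul_ofCoprodI_eq (hle : ∀ i, H ≤ A i) (p : PushoutI fun i => inclusion (hle i)) :
    ∃ (h : H) (l : List (Σ i, A i)) (hl : IsReducedSeq H l),
      PushoutI.base _ h * PushoutI.ofCoprodI hl.toWord.prod = p := by
  classical
  obtain ⟨d⟩ := PushoutI.NormalWord.transversal_nonempty _ fun i => inclusion_injective (hle i)
  set w := PushoutI.NormalWord.equiv (d := d) p
  exact ⟨w.head, w.toList, ⟨(reduced_inclusion_iff hle).1 w.reduced, w.chain_ne⟩,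
    PushoutI.NormalWord.equiv.symm_apply_apply p⟩

theorem injective_pushoutLift_iff (hle : ∀ i, H ≤ A i) :
    Injective (pushoutLift hle) ↔
      ∀ l : List (Σ i, A i), IsReducedSeq H l → seqProd l ∈ H → l = [] := by
  constructor
  · intro hinj l hl hmem
    have hbase : PushoutI.ofCoprodI hl.toWord.prod ∈ (PushoutI.base _).range :=
      ⟨⟨_, hmem⟩, hinj (by rw [pushoutLift_base, pushoutLift_ofCoprodI_prod]; rfl)⟩
    exact congrArg CoprodI.Word.toList
      ((hl.reduced hle).eq_empty_of_mem_range (fun i => inclusion_injective _) hbase)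
  · refine fun hR => (injective_iff_map_eq_one _).2 fun p hp => ?_
    obtain ⟨h, l, hl, rfl⟩ := exists_base_mul_ofCoprodI_eq hle p
    rw [map_mul, pushoutLift_base, pushoutLift_ofCoprodI_prod, IsReducedSeq.toWord_toList] at hp
    obtain rfl := hR l hl (by rw [eq_inv_of_mul_eq_one_right hp]; exact inv_mem h.2)
    obtain rfl : h = 1 := Subtype.ext (by simpa [IsReducedSeq.toWord] using hp)
    simp [IsReducedSeq.toWord, CoprodI.Word.prod]

lemma exists_mul_seqProd_eq [Nonempty ι] (hle : ∀ i, H ≤ A i) {g : G} (hg : g ∈ ⨆ i, A i) :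
    ∃ h ∈ H, ∃ l : List (Σ i, A i), IsReducedSeq H l ∧ h * seqProd l = g := by
  rw [← range_pushoutLift hle] at hg
  obtain ⟨p, rfl⟩ := hg
  obtain ⟨h, l, hl, rfl⟩ := exists_base_mul_ofCoprodI_eq hle p
  exact ⟨h, h.2, l, hl, by rw [map_mul, pushoutLift_base, pushoutLift_ofCoprodI_prod]; rfl⟩

lemma injective_pushoutLift_of_le {B : ι → Subgroup G} (hBA : ∀ i, B i ≤ A i)
    (hle : ∀ i, H ≤ A i) (hHB : ∀ i, H ≤ B i) (hinj : Injective (pushoutLift hle)) :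
    Injective (pushoutLift hHB) := by
  rw [injective_pushoutLift_iff] at hinj ⊢
  intro l hl hmem
  let l' : List (Σ i, A i) := l.map fun x => ⟨x.1, inclusion (hBA x.1) x.2⟩
  have hl' : IsReducedSeq H l' :=
    ⟨fun x hx => by obtain ⟨y, hy, rfl⟩ := List.mem_map.1 hx; exact hl.1 y hy,
      by simpa [l', List.isChain_map] using hl.2⟩
  have hprod : seqProd l' = seqProd l := by simp [l', seqProd, Function.comp_def]
  simpa [l'] using hinj l' hl' (hprod ▸ hmem)

section Normalizer

variable {H₀ : Subgroup G}

lemma le_normalizer_of_conj_le [Nonempty ι] (hle : ∀ i, H ≤ A i) (hH₀ : H₀ ≤ H)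
    (hN : ∀ i, ∀ x ∈ A i, (∀ n ∈ H₀, x * n * x⁻¹ ∈ H) → x ∈ normalizer (H₀ : Set G)) :
    H ≤ normalizer (H₀ : Set G) := fun h hh =>
  hN (Classical.arbitrary ι) h (hle _ hh) fun _ hn =>
    mul_mem (mul_mem hh (hH₀ hn)) (inv_mem hh)

lemma IsReducedSeq.mem_normalizer (hle : ∀ i, H ≤ A i) (hinj : Injective (pushoutLift hle))
    (hH₀ : H₀ ≤ H)
    (hN : ∀ i, ∀ x ∈ A i, (∀ n ∈ H₀, x * n * x⁻¹ ∈ H) → x ∈ normalizer (H₀ : Set G))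
    {l : List (Σ i, A i)} (hl : IsReducedSeq H l)
    (hconj : ∀ n ∈ H₀, (seqProd l)⁻¹ * n * seqProd l ∈ H) :
    ∀ x ∈ l, (x.2 : G) ∈ normalizer (H₀ : Set G) := by
  induction l with
  | nil => simp
  | cons x t ih =>
    have hx : ∀ n ∈ H₀, (x.2 : G)⁻¹ * n * x.2 ∈ H := by
      intro n hn
      by_contra hm
      have hm' : (x.2 : G)⁻¹ * n * x.2 ∈ A x.1 :=
        mul_mem (mul_mem (inv_mem x.2.2) (hle x.1 (hH₀ hn))) x.2.2
      have hnil := (injective_pushoutLift_iff hle).1 hinj _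
        (hl.seqInv_append_cons (m := ⟨_, hm'⟩) hm) (by simpa [mul_assoc] using hconj n hn)
      simp at hnil
    have hxN : (x.2 : G) ∈ normalizer (H₀ : Set G) :=
      inv_mem_iff.1 (hN x.1 _ (inv_mem x.2.2) (by simpa using hx))
    have ht : ∀ n ∈ H₀, (seqProd t)⁻¹ * n * seqProd t ∈ H := fun n hn => by
      simpa [mul_assoc] using hconj _ ((mem_normalizer_iff.1 hxN n).1 hn)
    exact List.forall_mem_cons.2 ⟨hxN, ih hl.of_cons ht⟩

theorem normalizer_eq_iSup_inf_normalizer [Nonempty ι] (hle : ∀ i, H ≤ A i)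
    (hinj : Injective (pushoutLift hle)) (htop : ⨆ i, A i = ⊤) (hH₀ : H₀ ≤ H)
    (hN : ∀ i, ∀ x ∈ A i, (∀ n ∈ H₀, x * n * x⁻¹ ∈ H) → x ∈ normalizer (H₀ : Set G)) :
    normalizer (H₀ : Set G) = ⨆ i, A i ⊓ normalizer (H₀ : Set G) := by
  refine le_antisymm (fun g hg => ?_) (iSup_le fun _ => inf_le_right)
  obtain ⟨h, hh, l, hl, rfl⟩ := exists_mul_seqProd_eq hle (htop ▸ mem_top g)
  have hHN := le_normalizer_of_conj_le hle hH₀ hN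
  have hlN : seqProd l ∈ normalizer (H₀ : Set G) := by
    simpa using mul_mem (inv_mem (hHN hh)) hg
  have hletters := hl.mem_normalizer hle hinj hH₀ hN fun n hn =>
    hH₀ ((mem_normalizer_iff''.1 hlN n).1 hn)
  refine mul_mem (mem_iSup_of_mem (Classical.arbitrary ι) ⟨hle _ hh, hHN hh⟩) (list_prod_mem ?_)
  simp only [List.mem_map]
  rintro _ ⟨x, hx, rfl⟩
  exact mem_iSup_of_mem x.1 ⟨x.2.2, hletters x hx⟩

end Normalizer

end Subgroup

namespace IsAmalgamIn

open Subgroup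

variable {G : Type u} [Group G] {G₁ G₂ H : Subgroup G}

lemma injective_pushoutLift (h : IsAmalgamIn G₁ G₂ H ⊤) (hle : ∀ b, H ≤ cond b G₁ G₂) :
    Injective (pushoutLift hle) := by
  obtain ⟨hinf, -, huniv⟩ := h
  obtain ⟨f, ⟨hf₁, hf₂⟩, -⟩ := huniv _ (PushoutI.of (φ := fun b => inclusion (hle b)) true)
    (PushoutI.of (φ := fun b => inclusion (hle b)) false) fun x hx₁ hx₂ => by
      have hx : x ∈ H := hinf ▸ ⟨hx₁, hx₂⟩
      exact (PushoutI.of_apply_eq_base (fun b => inclusion (hle b)) true ⟨x, hx⟩).trans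
        (PushoutI.of_apply_eq_base (fun b => inclusion (hle b)) false ⟨x, hx⟩).symm
  let π := (pushoutLift hle).codRestrict ⊤ fun _ => mem_top _
  have hπ : f.comp π = MonoidHom.id _ := by
    refine PushoutI.hom_ext_nonempty fun b => ?_
    ext x
    cases b
    exacts [hf₂ x x.2 _, hf₁ x x.2 _]
  intro p q hpq
  calc p = f (π p) := (DFunLike.congr_fun hπ p).symm
    _ = f (π q) := congrArg f (Subtype.ext hpq)
    _ = q := DFunLike.congr_fun hπ q

lemma of_injective_pushoutLift (hinf : G₁ ⊓ G₂ = H) (hle : ∀ b, H ≤ cond b G₁ G₂)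
    (hinj : Injective (pushoutLift hle)) : IsAmalgamIn G₁ G₂ H (G₁ ⊔ G₂) := by
  refine ⟨hinf, rfl, fun Q _ f₁ f₂ hf => ?_⟩
  have hrange : (pushoutLift hle).range = G₁ ⊔ G₂ := by
    rw [range_pushoutLift, iSup_bool_eq]; rfl
  let e := (MonoidHom.ofInjective hinj).trans (MulEquiv.subgroupCongr hrange)
  have he : ∀ b (x : ↥(cond b G₁ G₂)) (hx : (x : G) ∈ G₁ ⊔ G₂),
      e.symm ⟨x, hx⟩ = PushoutI.of b x :=
    fun b x hx => e.symm_apply_eq.2 (Subtype.ext (pushoutLift_of hle b x).symm)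
  let F : PushoutI (fun b => inclusion (hle b)) →* Q :=
    PushoutI.lift (fun b => match b with | true => f₁ | false => f₂)
      (f₁.comp (inclusion (hle true))) fun b => by
        cases b
        · ext h; exact (hf h (hle true h.2) (hle false h.2)).symm
        · rfl
  refine ⟨F.comp e.symm.toMonoidHom, ⟨fun x hx hxT => ?_, fun x hx hxT => ?_⟩,
    fun f' ⟨hf'₁, hf'₂⟩ => ?_⟩
  · simp [he true ⟨x, hx⟩ hxT, F]
  · simp [he false ⟨x, hx⟩ hxT, F]
  · suffices f'.comp e.toMonoidHom = F by
      rw [← this, MonoidHom.comp_assoc]; ext; simp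
    refine PushoutI.hom_ext_nonempty fun b => ?_
    ext x
    cases b
    exacts [hf'₂ x x.2 _, hf'₁ x x.2 _]

lemma subgroupOf {T : Subgroup G} (h : IsAmalgamIn G₁ G₂ H T) :
    IsAmalgamIn (G₁.subgroupOf T) (G₂.subgroupOf T) (H.subgroupOf T) ⊤ := by
  obtain ⟨hinf, hsup, huniv⟩ := h
  have h₁ : G₁ ≤ T := hsup ▸ le_sup_left
  have h₂ : G₂ ≤ T := hsup ▸ le_sup_right
  refine ⟨by rw [← hinf]; ext; simp [mem_subgroupOf],
    by rw [← subgroupOf_sup h₁ h₂, hsup, subgroupOf_self], fun Q _ f₁ f₂ hf => ?_⟩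
  obtain ⟨F, ⟨hF₁, hF₂⟩, huniq⟩ := huniv Q
    (f₁.comp (subgroupOfEquivOfLe h₁).symm.toMonoidHom)
    (f₂.comp (subgroupOfEquivOfLe h₂).symm.toMonoidHom)
    fun x hx₁ hx₂ => hf ⟨x, h₁ hx₁⟩ hx₁ hx₂
  let e : (⊤ : Subgroup T) ≃* T := topEquiv
  refine ⟨F.comp e.toMonoidHom, ⟨fun x hx _ => hF₁ x hx x.2, fun x hx _ => hF₂ x hx x.2⟩,
    fun f' ⟨hf'₁, hf'₂⟩ => ?_⟩
  have := huniq (f'.comp e.symm.toMonoidHom)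
    ⟨fun x hx hxT => hf'₁ ⟨x, hxT⟩ hx trivial, fun x hx hxT => hf'₂ ⟨x, hxT⟩ hx trivial⟩
  ext x
  rw [← this]
  rfl

end IsAmalgamIn

open Subgroup in
theorem stmt5 {G : Type u} [Group G] (G₁ G₂ H H₀ : Subgroup G)
    (hG : IsAmalgamIn G₁ G₂ H ⊤)
    (hH₀ : H₀ ≤ H)
    (hcond : ∀ x : G, (x ∈ G₁ ∨ x ∈ G₂) →
      Subgroup.map (MulAut.conj x).toMonoidHom H₀ ≤ H →
      Subgroup.map (MulAut.conj x).toMonoidHom H₀ = H₀) :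
    H ≤ (Subgroup.normalizer (H₀ : Set G)) ∧
    (Subgroup.normalizer (H₀ : Set G)) = (G₁ ⊓ (Subgroup.normalizer (H₀ : Set G))) ⊔ (G₂ ⊓ (Subgroup.normalizer (H₀ : Set G))) ∧
    IsAmalgamIn ((G₁ ⊓ (Subgroup.normalizer (H₀ : Set G))).subgroupOf (Subgroup.normalizer (H₀ : Set G)))
      ((G₂ ⊓ (Subgroup.normalizer (H₀ : Set G))).subgroupOf (Subgroup.normalizer (H₀ : Set G)))
      (H.subgroupOf (Subgroup.normalizer (H₀ : Set G))) (⊤ : Subgroup ↥(Subgroup.normalizer (H₀ : Set G))) := by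
  set N := normalizer (H₀ : Set G)
  have hinf : G₁ ⊓ G₂ = H := hG.1
  have hle : ∀ b, H ≤ cond b G₁ G₂ := by
    rintro (_ | _) <;> simp [← hinf]
  have hN : ∀ b, ∀ x ∈ cond b G₁ G₂, (∀ n ∈ H₀, x * n * x⁻¹ ∈ H) → x ∈ N := by
    refine fun b x hx hconj => mem_normalizer_iff_map_conj_eq.2 <|
      hcond x ?_ fun _ ⟨n, hn, h⟩ => h ▸ hconj n hn
    cases b
    exacts [.inr hx, .inl hx]
  have hinj := hG.injective_pushoutLift hle
  have hHN : H ≤ N := le_normalizer_of_conj_le hle hH₀ hN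
  have hNsup : N = (G₁ ⊓ N) ⊔ (G₂ ⊓ N) := by
    simpa [iSup_bool_eq] using
      normalizer_eq_iSup_inf_normalizer hle hinj (by simpa [iSup_bool_eq] using hG.2.1) hH₀ hN
  refine ⟨hHN, hNsup, ?_⟩
  have hleN : ∀ b, H ≤ cond b (G₁ ⊓ N) (G₂ ⊓ N) := by
    rintro (_ | _)
    exacts [le_inf (hle false) hHN, le_inf (hle true) hHN]
  have hinjN := injective_pushoutLift_of_le (by rintro (_ | _) <;> simp) hle hleN hinj
  have := IsAmalgamIn.of_injective_pushoutLift
    (by rw [inf_inf_inf_comm, hinf, inf_idem, inf_eq_left.2 hHN]) hleN hinjN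
  rw [← hNsup] at this
  exact this.subgroupOf
end

section
/- If g ∈ L normalizes A (i.e., gAg⁻¹ = A), then g ∈ K. -/
universe u

/-!
Write `L = E *_Z K` with `Z = ⟨c * b⟩` infinite cyclic. By the normal form theorem for amalgamated
products, the product of a nonempty reduced word never lies in `Z`, and one whose first letter lies
in `E` never lies in `K` (append the inverse of its product as a last letter). An element `g ∉ K`
can be written `g = k₁ v k₂` with `k₁, k₂ ∈ K` and `v` a reduced word beginning and ending in `E`.
As `a` has finite order and `Z` is torsion free, `y = k₂ a k₂⁻¹` lies in `K \ Z`, so `v y v⁻¹` is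
a reduced word beginning in `E`, and `g a g⁻¹ = k₁ (v y v⁻¹) k₁⁻¹ ∉ K`, whereas `g a g⁻¹ ∈ A ≤ K`.
-/

open Monoid CoprodI

theorem Subgroup.IsComplement.eq_one_of_mem_of_mem {G : Type*} [Group G] {S T : Set G}
    (hST : IsComplement S T) (hS : 1 ∈ S) (hT : 1 ∈ T) {x : G} (hxS : x ∈ S) (hxT : x ∈ T) :
    x = 1 :=
  congrArg Subtype.val <| (hST.equiv_fst_eq_self_of_mem_of_one_mem hT hxS).symm.trans
    (hST.equiv_fst_eq_one_of_mem_of_one_mem hS hxT)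

theorem notMem_zpowers_of_isOfFinOrder {G : Type*} [Group G] {x z : G} (hz : ¬IsOfFinOrder z)
    (hx : IsOfFinOrder x) (hx1 : x ≠ 1) : x ∉ Subgroup.zpowers z := by
  intro hxz
  obtain ⟨n, rfl⟩ := Subgroup.mem_zpowers_iff.1 hxz
  obtain ⟨m, hm, hzm⟩ := hx.exists_pow_eq_one
  have : n * m = 0 :=
    injective_zpow_iff_not_isOfFinOrder.2 hz (by simpa [zpow_mul] using hzm)
  rcases mul_eq_zero.1 this with rfl | hm0
  · exact hx1 (zpow_zero z)
  · omega

namespace IsAmalgamIn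

variable {G : Type u} [Group G] {E K Z : Subgroup G}

/-- `true` indexes `E` and `false` indexes `K`. -/
abbrev Factor (E K : Subgroup G) (b : Bool) : Type u := ↥(cond b E K)

def coprodLift (E K : Subgroup G) : CoprodI (Factor E K) →* G :=
  CoprodI.lift fun b => (cond b E K).subtype

theorem coprodLift_of {b : Bool} (x : Factor E K b) : coprodLift E K (CoprodI.of x) = x :=
  CoprodI.lift_of _ x

theorem coprodLift_prod_singleton {b : Bool} (x : Factor E K b) (hx : x ≠ 1) :
    coprodLift E K (NeWord.singleton x hx).prod = x := by
  rw [NeWord.prod_singleton, coprodLift_of]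

theorem coprodLift_prod_append {i j k l : Bool} (w₁ : NeWord (Factor E K) i j) (hne : j ≠ k)
    (w₂ : NeWord (Factor E K) k l) :
    coprodLift E K (w₁.append hne w₂).prod = coprodLift E K w₁.prod * coprodLift E K w₂.prod := by
  rw [NeWord.append_prod, map_mul]

theorem coprodLift_prod_inv {i j : Bool} (w : NeWord (Factor E K) i j) :
    coprodLift E K w.inv.prod = (coprodLift E K w.prod)⁻¹ := by
  rw [NeWord.inv_prod, map_inv]

theorem inf_le_cond (E K : Subgroup G) : ∀ b, E ⊓ K ≤ cond b E K
  | true => inf_le_left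
  | false => inf_le_right

def baseHom (E K : Subgroup G) (b : Bool) : ↥(E ⊓ K) →* Factor E K b :=
  Subgroup.inclusion (inf_le_cond E K b)

theorem baseHom_injective (E K : Subgroup G) (b : Bool) : Function.Injective (baseHom E K b) :=
  Subgroup.inclusion_injective _

theorem subtype_comp_baseHom (E K : Subgroup G) (b : Bool) :
    (cond b E K).subtype.comp (baseHom E K b) = (E ⊓ K).subtype :=
  Subgroup.subtype_comp_inclusion _

def pushoutLift (E K : Subgroup G) : PushoutI (baseHom E K) →* G :=
  PushoutI.lift (fun b => (cond b E K).subtype) (E ⊓ K).subtype (subtype_comp_baseHom E K)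

theorem pushoutLift_comp_ofCoprodI :
    (pushoutLift E K).comp PushoutI.ofCoprodI = coprodLift E K :=
  CoprodI.ext_hom _ _ fun b => MonoidHom.ext fun x => by
    rw [MonoidHom.comp_apply, MonoidHom.comp_apply, PushoutI.ofCoprodI_of, pushoutLift,
      PushoutI.lift_of, MonoidHom.comp_apply, coprodLift_of]
    rfl

theorem pushoutLift_surjective (htop : E ⊔ K = ⊤) : Function.Surjective (pushoutLift E K) := by
  rw [← MonoidHom.range_eq_top, eq_top_iff, ← htop]
  refine sup_le (fun x hx => ⟨PushoutI.of true ⟨x, hx⟩, ?_⟩)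
    (fun x hx => ⟨PushoutI.of false ⟨x, hx⟩, ?_⟩) <;> exact PushoutI.lift_of ..

theorem exists_comp_coprodLift_eq_ofCoprodI (hAm : IsAmalgamIn E K (E ⊓ K) ⊤) :
    ∃ F : G →* PushoutI (baseHom E K), F.comp (coprodLift E K) = PushoutI.ofCoprodI := by
  obtain ⟨F, ⟨hFE, hFK⟩, -⟩ := hAm.2.2 (PushoutI (baseHom E K))
    (PushoutI.of (φ := baseHom E K) true) (PushoutI.of (φ := baseHom E K) false)
    fun x hxE hxK => by
      have hx : x ∈ E ⊓ K := ⟨hxE, hxK⟩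
      exact (PushoutI.of_apply_eq_base (baseHom E K) true ⟨x, hx⟩).trans
        (PushoutI.of_apply_eq_base (baseHom E K) false ⟨x, hx⟩).symm
  refine ⟨F.comp (Subgroup.topEquiv.symm : G ≃* ↥(⊤ : Subgroup G)).toMonoidHom,
    CoprodI.ext_hom _ _ fun b => MonoidHom.ext fun x => ?_⟩
  cases b
  · exact hFK x x.2 trivial
  · exact hFE x x.2 trivial

def IsReduced (Z : Subgroup G) {i j : Bool} (w : NeWord (Factor E K) i j) : Prop :=
  ∀ x ∈ w.toList, (x.2 : G) ∉ Z

theorem isReduced_singleton {b : Bool} (x : Factor E K b) (hx : x ≠ 1) :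
    IsReduced Z (NeWord.singleton x hx) ↔ (x : G) ∉ Z := by
  simp [IsReduced]

theorem isReduced_append {i j k l : Bool} {w₁ : NeWord (Factor E K) i j} {hne : j ≠ k}
    {w₂ : NeWord (Factor E K) k l} :
    IsReduced Z (w₁.append hne w₂) ↔ IsReduced Z w₁ ∧ IsReduced Z w₂ := by
  simp [IsReduced, or_imp, forall_and]

theorem IsReduced.inv {i j : Bool} {w : NeWord (Factor E K) i j} (hw : IsReduced Z w) :
    IsReduced Z w.inv := by
  induction w with
  | singleton x hx =>
    rw [isReduced_singleton] at hw
    exact (isReduced_singleton x⁻¹ _).2 fun h => hw (by simpa using inv_mem h)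
  | append w₁ hne w₂ ih₁ ih₂ =>
    rw [isReduced_append] at hw
    exact isReduced_append.2 ⟨ih₂ hw.2, ih₁ hw.1⟩

theorem IsReduced.reduced {i j : Bool} {w : NeWord (Factor E K) i j}
    (hw : IsReduced (E ⊓ K) w) : PushoutI.Reduced (baseHom E K) w.toWord :=
  fun x hx ⟨z, hz⟩ => hw x hx (by rw [← hz]; exact z.2)

theorem ne_one_of_coe_notMem {b : Bool} {x : Factor E K b} (hx : (x : G) ∉ Z) : x ≠ 1 :=
  fun h => hx (by simp [h])

theorem coprodLift_prod_notMem (hAm : IsAmalgamIn E K Z ⊤) {i j : Bool}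
    (w : NeWord (Factor E K) i j) (hw : IsReduced Z w) : coprodLift E K w.prod ∉ Z := by
  obtain rfl := hAm.1
  obtain ⟨F, hF⟩ := exists_comp_coprodLift_eq_ofCoprodI hAm
  intro hwZ
  refine w.toList_ne_nil <| congrArg Word.toList <|
    hw.reduced.eq_empty_of_mem_range (baseHom_injective E K) ⟨⟨_, hwZ⟩, ?_⟩
  rw [← PushoutI.of_apply_eq_base _ true, ← PushoutI.ofCoprodI_of, ← hF,
    MonoidHom.comp_apply, coprodLift_of]
  rfl

theorem coprodLift_prod_notMem_right (hAm : IsAmalgamIn E K Z ⊤) {j : Bool}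
    (w : NeWord (Factor E K) true j) (hw : IsReduced Z w) : coprodLift E K w.prod ∉ K := by
  intro hK
  have hZ : (coprodLift E K w.prod)⁻¹ ∉ Z := fun h =>
    coprodLift_prod_notMem hAm w hw (by simpa using inv_mem h)
  let k : Factor E K false := ⟨(coprodLift E K w.prod)⁻¹, inv_mem hK⟩
  refine coprodLift_prod_notMem hAm
    ((NeWord.singleton k (ne_one_of_coe_notMem hZ)).append Bool.false_ne_true w)
    (isReduced_append.2 ⟨(isReduced_singleton _ _).2 hZ, hw⟩) ?_
  rw [coprodLift_prod_append, coprodLift_prod_singleton, inv_mul_cancel]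
  exact one_mem Z

theorem exists_eq_mul_coprodLift_prod (hEK : E ⊓ K = Z) (htop : E ⊔ K = ⊤) (g : G) :
    g ∈ Z ∨ ∃ z ∈ Z, ∃ (i j : Bool) (w : NeWord (Factor E K) i j),
      IsReduced Z w ∧ g = z * coprodLift E K w.prod := by
  subst hEK
  classical
  obtain ⟨p, rfl⟩ := pushoutLift_surjective htop g
  obtain ⟨d⟩ := PushoutI.NormalWord.transversal_nonempty _ (baseHom_injective E K)
  set w := PushoutI.NormalWord.equiv (d := d) p
  have hred : ∀ x ∈ w.toList, (x.2 : G) ∉ E ⊓ K := by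
    rintro ⟨b, x⟩ hx hxZ
    exact w.ne_one _ hx <| (d.compl b).eq_one_of_mem_of_mem (one_mem _) (d.one_mem b)
      ⟨⟨x, hxZ⟩, rfl⟩ (w.normalized b x hx)
  have hg : pushoutLift E K p = w.head * coprodLift E K w.toWord.prod := by
    have hp : p = w.prod := (PushoutI.NormalWord.equiv.symm_apply_apply p).symm
    rw [hp, PushoutI.NormalWord.prod, map_mul, ← pushoutLift_comp_ofCoprodI, pushoutLift,
      PushoutI.lift_base]
    rfl
  by_cases hw : w.toWord = Word.empty
  · left
    rw [hg, hw, Word.prod_empty, map_one, mul_one]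
    exact w.head.2
  · right
    obtain ⟨i, j, v, hv⟩ := NeWord.of_word _ hw
    exact ⟨w.head, w.head.2, i, j, v, fun x hx => hred x (by rw [← hv]; exact hx),
      by rw [hg, ← hv]; rfl⟩

/-- The part of `K` that `exists_eq_mul_coprodLift_prod_mul` splits off an end of a reduced word
whose end letter lies in `Factor E K b`: nothing if `b = true`, the letter itself if `b = false`. -/
def IsBoundary (Z K : Subgroup G) : Bool → G → Prop
  | true, k => k = 1
  | false, k => k ∈ K ∧ k ∉ Z

theorem IsBoundary.mem {b : Bool} {k : G} (h : IsBoundary Z K b k) : k ∈ K := by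
  cases b
  · exact h.1
  · exact (h : k = 1) ▸ one_mem K

theorem IsBoundary.mul {j k : Bool} (hne : j ≠ k) {a c : G} (ha : IsBoundary Z K j a)
    (hc : IsBoundary Z K k c) : IsBoundary Z K false (a * c) := by
  cases j <;> cases k
  · exact absurd rfl hne
  · exact ⟨mul_mem ha.1 hc.mem, by rw [(hc : c = 1), mul_one]; exact ha.2⟩
  · exact ⟨mul_mem ha.mem hc.1, by rw [(ha : a = 1), one_mul]; exact hc.2⟩
  · exact absurd rfl hne

theorem exists_eq_mul_coprodLift_prod_mul {i j : Bool} (w : NeWord (Factor E K) i j)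
    (hw : IsReduced Z w) :
    (i = false ∧ j = false ∧ IsBoundary Z K false (coprodLift E K w.prod)) ∨
      ∃ (k₁ k₂ : G) (v : NeWord (Factor E K) true true), IsReduced Z v ∧
        IsBoundary Z K i k₁ ∧ IsBoundary Z K j k₂ ∧
        coprodLift E K w.prod = k₁ * coprodLift E K v.prod * k₂ := by
  induction w with
  | @singleton b x hx =>
    rw [isReduced_singleton] at hw
    cases b
    · exact Or.inl ⟨rfl, rfl, by rw [coprodLift_prod_singleton]; exact ⟨x.2, hw⟩⟩
    · exact Or.inr ⟨1, 1, .singleton x hx, (isReduced_singleton x hx).2 hw, rfl, rfl,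
        by rw [one_mul, mul_one]⟩
  | append w₁ hne w₂ ih₁ ih₂ =>
    rw [isReduced_append] at hw
    rw [coprodLift_prod_append]
    rcases ih₁ hw.1 with ⟨rfl, rfl, h₁⟩ | ⟨a₁, b₁, v₁, hv₁, ha₁, hb₁, he₁⟩ <;>
      rcases ih₂ hw.2 with ⟨rfl, rfl, h₂⟩ | ⟨a₂, b₂, v₂, hv₂, ha₂, hb₂, he₂⟩
    · exact absurd rfl hne
    · exact Or.inr ⟨_, b₂, v₂, hv₂, h₁.mul hne ha₂, hb₂, by rw [he₂]; group⟩
    · exact Or.inr ⟨a₁, _, v₁, hv₁, ha₁, hb₁.mul hne h₂, by rw [he₁]; group⟩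
    · have hm := hb₁.mul hne ha₂
      let m : Factor E K false := ⟨b₁ * a₂, hm.1⟩
      refine Or.inr ⟨a₁, b₂, (v₁.append Bool.false_ne_true.symm (.singleton m
        (ne_one_of_coe_notMem hm.2))).append Bool.false_ne_true v₂,
        isReduced_append.2 ⟨isReduced_append.2 ⟨hv₁, (isReduced_singleton _ _).2 hm.2⟩, hv₂⟩,
        ha₁, hb₂, ?_⟩
      rw [coprodLift_prod_append, coprodLift_prod_append, coprodLift_prod_singleton, he₁, he₂]
      dsimp only [m]
      group

theorem mem_of_conj_mem (hAm : IsAmalgamIn E K Z ⊤) {y : G} (hyK : y ∈ K)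
    (hy : ∀ k ∈ K, k * y * k⁻¹ ∉ Z) {g : G} (hg : g * y * g⁻¹ ∈ K) : g ∈ K := by
  have hZK : Z ≤ K := hAm.1 ▸ inf_le_right
  rcases exists_eq_mul_coprodLift_prod hAm.1 hAm.2.1 g with hgZ | ⟨z, hz, i, j, w, hw, rfl⟩
  · exact hZK hgZ
  rcases exists_eq_mul_coprodLift_prod_mul w hw with
    ⟨-, -, hwK, -⟩ | ⟨k₁, k₂, v, hv, h₁, h₂, he⟩
  · exact mul_mem (hZK hz) hwK
  have hy' := hy k₂ h₂.mem
  let y' : Factor E K false := ⟨k₂ * y * k₂⁻¹, mul_mem (mul_mem h₂.mem hyK) (inv_mem h₂.mem)⟩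
  refine absurd ?_ (coprodLift_prod_notMem_right hAm
    ((v.append Bool.false_ne_true.symm (.singleton y' (ne_one_of_coe_notMem hy'))).append
      Bool.false_ne_true v.inv)
    (isReduced_append.2 ⟨isReduced_append.2 ⟨hv, (isReduced_singleton _ _).2 hy'⟩, hv.inv⟩))
  have hzk : z * k₁ ∈ K := mul_mem (hZK hz) h₁.mem
  convert mul_mem (mul_mem (inv_mem hzk) hg) hzk using 1
  rw [coprodLift_prod_append, coprodLift_prod_append, coprodLift_prod_singleton,
    coprodLift_prod_inv, he]
  dsimp only [y']
  group

theorem mem_of_conj_mem_of_isOfFinOrder {z : G} (hAm : IsAmalgamIn E K (Subgroup.zpowers z) ⊤)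
    (hz : ¬IsOfFinOrder z) {x : G} (hxK : x ∈ K) (hx : IsOfFinOrder x) (hx1 : x ≠ 1) {g : G}
    (hg : g * x * g⁻¹ ∈ K) : g ∈ K :=
  hAm.mem_of_conj_mem hxK (fun k _ => notMem_zpowers_of_isOfFinOrder hz
    ((MulAut.conj k).toMonoidHom.isOfFinOrder hx) (by rwa [Ne, conj_eq_one_iff])) hg

end IsAmalgamIn

theorem stmt9_general {L : Type u} [Group L]
    (p : ℕ) (hp : p.Prime)
    (a b c : L) (S : Subgroup L) (ha : a ∈ S)
    (A N : Subgroup L) (hA : A = Subgroup.zpowers a)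
    (hP1 : orderOf a = p)
    (M : Subgroup L)
    (K : Subgroup L) (hK : IsAmalgamIn M S N K)
    (E : Subgroup L)
    (hcb : ¬ IsOfFinOrder (c * b))
    (hL : IsAmalgamIn E K (Subgroup.zpowers (c * b)) ⊤) :
    ∀ g : L, Subgroup.map (MulAut.conj g).toMonoidHom A = A → g ∈ K := by
  intro g hgA
  have haK : a ∈ K := (hK.2.1 ▸ le_sup_right : S ≤ K) ha
  have hafin : IsOfFinOrder a := orderOf_pos_iff.1 (hP1 ▸ hp.pos)
  have ha1 : a ≠ 1 := fun h => hp.ne_one (by rw [← hP1, h, orderOf_one])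
  have hgag : g * a * g⁻¹ ∈ A := by
    have := Subgroup.mem_map_of_mem (MulAut.conj g).toMonoidHom (hA ▸ Subgroup.mem_zpowers a)
    rw [hgA] at this
    simpa using this
  exact hL.mem_of_conj_mem_of_isOfFinOrder hcb haK hafin ha1
    ((hA ▸ Subgroup.zpowers_le.2 haK : A ≤ K) hgag)

/-- Lemma 5.4 -/
theorem stmt9 {L : Type u} [Group L]
    (p : ℕ) (hp : p.Prime) (hp2 : 2 < p)
    (a b c : L) (S : Subgroup L) (hSfin : Finite ↥S) (ha : a ∈ S) (hb : b ∈ S)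
    (A N : Subgroup L) (hA : A = Subgroup.zpowers a) (hN : N = S ⊓ Subgroup.normalizer (A : Set L))
    (hP1 : orderOf a = p)
    (hP2 : b ∉ N)
    (hP3 : b ^ 2 = 1)
    (hP4 : ∀ k ∈ S, k * a = a * k → k * b = b * k → k = 1)
    (hP5 : ∀ f : ↥S →* ↥S,
      Function.Bijective f ∨ (f ⟨a, ha⟩ = 1 ∧ f ⟨b, hb⟩ = 1))
    (hP6 : ∀ x ∈ S, orderOf x ≠ p ^ 2)
    (hP7 : ¬ (p ∣ Nat.card (↥N ⧸ A.subgroupOf N)))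
    (hP8 : N ⊓ Subgroup.map (MulAut.conj b).toMonoidHom N = ⊥)
    (hInner : ∀ f : ↥S ≃* ↥S, ∃ s : ↥S, ∀ x, f x = s * x * s⁻¹)
    (hc : orderOf c = p ^ 2) (hcp : c ^ p = a)
    (M : Subgroup L)
    (hCN : Subgroup.zpowers c ⊓ N = A)
    (hM : M = Subgroup.zpowers c ⊔ N)
    (hMnorm : M ≤ Subgroup.normalizer (Subgroup.zpowers c : Set L))
    (K : Subgroup L) (hK : IsAmalgamIn M S N K)
    (q : ℕ) (hq : q.Prime) (hqS : ¬ (q ∣ Nat.card ↥S))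
    (E : Subgroup L) (R : Type u) [Ring R] (iso : Multiplicative R ≃* ↥E)
    (hERing : ∀ f : R →+ R, ∃ r : R, ∀ x, f x = r * x)
    (hTF : ∀ (x : R) (n : ℕ), n ≠ 0 → n • x = 0 → x = 0)
    (hDiv : ∀ p' : ℕ, p'.Prime → p' ≠ q → ∀ x : R, ∃ y : R, p' • y = x)
    (hInj : ∀ f : R →+ R, f ≠ 0 → Function.Injective f)
    (hone : (↑(iso (Multiplicative.ofAdd (1 : R))) : L) = c * b)
    (hcb : ¬ IsOfFinOrder (c * b))
    (hL : IsAmalgamIn E K (Subgroup.zpowers (c * b)) ⊤) :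
    ∀ g : L, Subgroup.map (MulAut.conj g).toMonoidHom A = A → g ∈ K :=
  stmt9_general p hp a b c S ha A N hA hP1 M K hK E hcb hL
end
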